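/- arXiv:math/0507596 — 6 statements merged into one kernel-verified Lean document; each statement's English description precedes it below -/
import Mathlib

section
/- The only solutions $(p,\alpha,q,\beta)$ of the equation $p^{\alpha-2}(p^2-1)=q^{\beta-2}(q^2-1)$ with $p<q$ primes and $\alpha,\beta$ positive integers are $(2,5,3,3)$, $(2,5,5,2)$, $(2,6,7,2)$, $(3,3,5,2)$ and $(5,3,11,2)$. -/
set_option maxHeartbeats 1000000

lemma sq_sub_one (n : ℕ) (h : 1 ≤ n) : n^2 - 1 = (n-1)*(n+1) := by
  obtain ⟨m, rfl⟩ : ∃ m, n = m+1 := ⟨n-1, by omega⟩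
  have h1 : (m+1)^2 = m*(m+2)+1 := by ring
  have h2 : (m+1-1)*(m+1+1) = m*(m+2) := by simp
  rw [h1, h2, Nat.add_sub_cancel]

lemma coprime_pow_dvd {p a x y : ℕ} (hp : p.Prime) (h : p^a ∣ x*y) (hx : ¬ p ∣ x) : p^a ∣ y :=
  (Nat.Coprime.pow_left a ((Nat.Prime.coprime_iff_not_dvd hp).mpr hx)).dvd_of_dvd_mul_left h

-- b = 0 case, p = 2
lemma case_p2 (q a : ℕ) (hq : q.Prime) (hq3 : 3 ≤ q)
    (hM : 2^a * 3 = q^2 - 1) :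
    (a=3 ∧ q=5) ∨ (a=4 ∧ q=7) := by
  obtain ⟨m, hm⟩ := hq.odd_of_ne_two (by omega)
  have hm1 : 1 ≤ m := by omega
  have hq2 : q^2 = 4*(m*(m+1)) + 1 := by subst hm; ring
  have key : 2^a * 3 = 4*(m*(m+1)) := by rw [hq2, Nat.add_sub_cancel] at hM; exact hM
  rcases a with _ | _ | s
  · exfalso; have : (4:ℕ) ∣ 3 := ⟨m*(m+1), by simpa using key⟩; norm_num at this
  · exfalso; have : (4:ℕ) ∣ 6 := ⟨m*(m+1), by simpa using key⟩; norm_num at this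
  · have key2 : m*(m+1) = 2^s * 3 := by
      have h4 : 2^(s+2) * 3 = 4 * (2^s * 3) := by ring
      rw [h4] at key
      exact (Nat.eq_of_mul_eq_mul_left (by norm_num) key).symm
    rcases Nat.even_or_odd m with he | ho
    · -- m even, m+1 odd divides 3
      have not2 : ¬ (2 ∣ m + 1) := by obtain ⟨k, hk⟩ := he; omega
      have hcop : Nat.Coprime (m+1) (2^s) :=
        Nat.Coprime.pow_right s (Nat.coprime_comm.mp
          ((Nat.Prime.coprime_iff_not_dvd Nat.prime_two).mpr not2))
      have hdvd3 : (m+1) ∣ 3 :=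
        hcop.dvd_of_dvd_mul_left (key2 ▸ dvd_mul_left (m+1) m)
      rcases Nat.prime_three.eq_one_or_self_of_dvd (m+1) hdvd3 with h1 | h1
      · omega
      · -- m = 2, q = 5
        have hm2 : m = 2 := by omega
        subst hm2
        have h2s : 2^s = 2^1 := by omega
        have := Nat.pow_right_injective (le_refl 2) h2s
        left; omega
    · -- m odd divides 3
      have not2 : ¬ (2 ∣ m) := by obtain ⟨k, hk⟩ := ho; omega
      have hcop : Nat.Coprime m (2^s) :=
        Nat.Coprime.pow_right s (Nat.coprime_comm.mp
          ((Nat.Prime.coprime_iff_not_dvd Nat.prime_two).mpr not2))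
      have hdvd3 : m ∣ 3 :=
        hcop.dvd_of_dvd_mul_left (key2 ▸ dvd_mul_right m (m+1))
      rcases Nat.prime_three.eq_one_or_self_of_dvd m hdvd3 with h1 | h1
      · exfalso
        subst h1
        have h32 : (3:ℕ) ∣ 2 := by
          have : (3:ℕ) ∣ 2^s * 3 := dvd_mul_left 3 (2^s)
          rw [← key2] at this
          simpa using this
        norm_num at h32
      · subst h1
        have h2s : 2^s = 2^2 := by omega
        have := Nat.pow_right_injective (le_refl 2) h2s
        right; omega

lemma case_podd (p q a : ℕ) (hp : p.Prime) (hq : q.Prime) (hp3 : 3 ≤ p) (hpq : p < q)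
    (ha : 1 ≤ a) (hM : p^a * (p^2-1) = q^2 - 1) :
    (p=3 ∧ a=1 ∧ q=5) ∨ (p=5 ∧ a=1 ∧ q=11) := by
  have hq5 : 5 ≤ q := by
    have h4 : q ≠ 4 := by rintro rfl; norm_num at hq
    omega
  have h1p : 1 ≤ p^2 := Nat.one_le_pow _ _ (by omega)
  have h1q : 1 ≤ q^2 := Nat.one_le_pow _ _ (by omega)
  have hMZ : (p:ℤ)^a * ((p:ℤ)^2 - 1) = (q:ℤ)^2 - 1 := by
    have := hM; zify [h1p, h1q] at this; exact this
  have hp0 : (p:ℤ) ≠ 0 := by positivity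
  have hp3' : (3:ℤ) ≤ (p:ℤ) := by exact_mod_cast hp3
  have hq5' : (5:ℤ) ≤ (q:ℤ) := by exact_mod_cast hq5
  have hdvd : p^a ∣ (q-1)*(q+1) := by
    rw [← sq_sub_one q (by omega)]
    exact hM ▸ dvd_mul_right _ _
  have hnboth : ¬(p ∣ q-1 ∧ p ∣ q+1) := by
    rintro ⟨hd1, hd2⟩
    have h2 : p ∣ (q+1) - (q-1) := Nat.dvd_sub hd2 hd1
    have : (q+1) - (q-1) = 2 := by omega
    rw [this] at h2
    have := Nat.le_of_dvd (by norm_num) h2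
    omega
  have hdall : p^a ∣ q-1 ∨ p^a ∣ q+1 := by
    by_cases hpd : p ∣ q - 1
    · left
      have hnd : ¬ p ∣ q+1 := fun h => hnboth ⟨hpd, h⟩
      exact coprime_pow_dvd hp (by rwa [mul_comm] at hdvd) hnd
    · right; exact coprime_pow_dvd hp hdvd hpd
  rcases (show a = 1 ∨ a = 2 ∨ 3 ≤ a by omega) with ha1 | ha2 | ha3
  · -- a = 1 : the elliptic-style case
    subst ha1
    rw [pow_one] at hMZ hdall
    rcases hdall with hd | hd
    · -- p ∣ q - 1, leads to p=5, q=11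
      obtain ⟨k, hk⟩ := hd
      have hk1 : k ≠ 0 := by rintro rfl; omega
      have hkZ : (q:ℤ) = p*k + 1 := by
        have h' : q - 1 = p*k := hk
        zify [show 1 ≤ q by omega] at h'
        linarith
      rw [hkZ] at hMZ
      have hkpos : (1:ℤ) ≤ (k:ℤ) := by
        have : 1 ≤ k := Nat.one_le_iff_ne_zero.mpr hk1
        exact_mod_cast this
      have hmul : (p:ℤ)*((k:ℤ)^2*(p:ℤ) + 2*(k:ℤ) + 1) = (p:ℤ)*((p:ℤ)^2) := by
        linear_combination -hMZ
      have heq : (k:ℤ)^2*(p:ℤ) + 2*(k:ℤ) + 1 = (p:ℤ)^2 :=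
        mul_left_cancel₀ hp0 hmul
      have ht : (p:ℤ)*((p:ℤ) - (k:ℤ)^2) = 2*k+1 := by linear_combination -heq
      have htpos : 1 ≤ (p:ℤ) - (k:ℤ)^2 := by
        by_contra hc
        push_neg at hc
        nlinarith [ht, hkpos, hp3', mul_nonpos_of_nonneg_of_nonpos (by linarith : (0:ℤ) ≤ (p:ℤ)) (by linarith : (p:ℤ) - (k:ℤ)^2 ≤ 0)]
      have ht2 : (p:ℤ) - (k:ℤ)^2 < 2 := by
        by_contra hc
        push_neg at hc
        have hA : (k:ℤ)^2 + 2 ≤ (p:ℤ) := by linarith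
        nlinarith [ht, mul_le_mul hA hc (by norm_num) (by linarith), sq_nonneg ((k:ℤ)-1)]
      have hteq : (p:ℤ) - (k:ℤ)^2 = 1 := by omega
      have hp2k : (p:ℤ) = 2*(k:ℤ)+1 := by rw [hteq] at ht; linarith
      have hk2 : (k:ℤ) = 2 := by
        have h0 : (k:ℤ)*((k:ℤ)-2) = 0 := by linear_combination hp2k - hteq
        rcases mul_eq_zero.mp h0 with h | h
        · omega
        · omega
      have hpv : p = 5 := by
        have : (p:ℤ) = 5 := by rw [hp2k, hk2]; norm_num
        exact_mod_cast this
      have hqv : q = 11 := by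
        have : (q:ℤ) = 11 := by rw [hkZ, hk2, hpv]; norm_num
        exact_mod_cast this
      right; exact ⟨hpv, rfl, hqv⟩
    · -- p ∣ q + 1, leads to p=3, q=5
      obtain ⟨k, hk⟩ := hd
      have hk1 : k ≠ 0 := by rintro rfl; omega
      have hkZ : (q:ℤ) = p*k - 1 := by
        have h' : q + 1 = p*k := hk
        zify at h'
        linarith
      rw [hkZ] at hMZ
      have hkpos : (1:ℤ) ≤ (k:ℤ) := by
        have : 1 ≤ k := Nat.one_le_iff_ne_zero.mpr hk1
        exact_mod_cast this
      have hmul2 : (p:ℤ)*((k:ℤ)^2*(p:ℤ)) = (p:ℤ)*((p:ℤ)^2 + 2*(k:ℤ) - 1) := by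
        linear_combination -hMZ
      have heq : (k:ℤ)^2*(p:ℤ) = (p:ℤ)^2 + 2*(k:ℤ) - 1 :=
        mul_left_cancel₀ hp0 hmul2
      have ht : (p:ℤ)*((k:ℤ)^2 - (p:ℤ)) = 2*k-1 := by linear_combination heq
      have htpos : 1 ≤ (k:ℤ)^2 - (p:ℤ) := by
        by_contra hc
        push_neg at hc
        nlinarith [ht, hkpos, hp3', mul_nonpos_of_nonneg_of_nonpos (by linarith : (0:ℤ) ≤ (p:ℤ)) (by linarith : (k:ℤ)^2 - (p:ℤ) ≤ 0)]
      have ht2 : (k:ℤ)^2 - (p:ℤ) < 2 := by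
        by_contra hc
        push_neg at hc
        have hA : (0:ℤ) ≤ ((k:ℤ)^2 - (p:ℤ) - 2) * ((p:ℤ) - 3) :=
          mul_nonneg (by linarith) (by linarith)
        have hB : (p:ℤ)*2 ≤ (p:ℤ)*((k:ℤ)^2 - (p:ℤ)) :=
          mul_le_mul_of_nonneg_left hc (by linarith)
        nlinarith [ht, hA, hB, hkpos, sq_nonneg ((k:ℤ)-1)]
      have hteq : (k:ℤ)^2 - (p:ℤ) = 1 := by omega
      have hp2k : (p:ℤ) = 2*(k:ℤ)-1 := by rw [hteq] at ht; linarith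
      have hk2 : (k:ℤ) = 2 := by
        have h0 : (k:ℤ)*((k:ℤ)-2) = 0 := by linear_combination hteq + hp2k
        rcases mul_eq_zero.mp h0 with h | h
        · omega
        · omega
      have hpv : p = 3 := by
        have : (p:ℤ) = 3 := by rw [hp2k, hk2]; norm_num
        exact_mod_cast this
      have hqv : q = 5 := by
        have : (q:ℤ) = 5 := by rw [hkZ, hk2, hpv]; norm_num
        exact_mod_cast this
      left; exact ⟨hpv, rfl, hqv⟩
  · -- a = 2 : impossible
    exfalso
    subst ha2
    have hqlt : q < p^2 := by
      have hZ : (q:ℤ) < (p:ℤ)^2 := by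
        by_contra hc
        push_neg at hc
        have hq0 : (0:ℤ) ≤ (q:ℤ) := by linarith
        have hpp : (0:ℤ) ≤ (p:ℤ)^2 := by positivity
        have h4 : (p:ℤ)^2*(p:ℤ)^2 ≤ (q:ℤ)*(q:ℤ) := mul_le_mul hc hc hpp hq0
        nlinarith [hMZ, h4, hp3', sq_nonneg ((p:ℤ)-3)]
      exact_mod_cast hZ
    rcases hdall with hd | hd
    · have := Nat.le_of_dvd (by omega) hd
      omega
    · have hle := Nat.le_of_dvd (by omega) hd
      have heq : q + 1 = p^2 := by omega
      have hq1 : (q:ℤ) = (p:ℤ)^2 - 1 := by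
        have : ((q:ℤ)+1) = (p:ℤ)^2 := by exact_mod_cast heq
        linarith
      rw [hq1] at hMZ
      nlinarith [hMZ, hp3', sq_nonneg ((p:ℤ)-3)]
  · -- a ≥ 3 : impossible
    exfalso
    have hle : p^a ≤ q + 1 := by
      rcases hdall with hd | hd
      · exact (Nat.le_of_dvd (by omega) hd).trans (by omega)
      · exact Nat.le_of_dvd (by omega) hd
    have hX3 : p^3 ≤ p^a := Nat.pow_le_pow_right (by omega) ha3
    have h1 : ((p:ℤ))^a ≤ (q:ℤ) + 1 := by exact_mod_cast hle
    have h2 : ((p:ℤ))^3 ≤ (p:ℤ)^a := by exact_mod_cast hX3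
    have hXpos : (0:ℤ) < (p:ℤ)^a := by positivity
    have e1 : (0:ℤ) ≤ ((q:ℤ) + 1 - (p:ℤ)^a) := by linarith
    have e2 : (0:ℤ) ≤ ((q:ℤ) - 1 + (p:ℤ)^a) := by linarith
    have s1 := mul_nonneg e1 e2
    have s2 : (p:ℤ)^a*(p:ℤ)^a ≤ (p:ℤ)^a*(p:ℤ)^2 + (p:ℤ)^a := by nlinarith [hMZ, s1]
    have s3 : (p:ℤ)^a ≤ (p:ℤ)^2 + 1 := by
      by_contra hc
      push_neg at hc
      have h5 : (p:ℤ)^a*((p:ℤ)^2+1) < (p:ℤ)^a*(p:ℤ)^a := mul_lt_mul_of_pos_left hc hXpos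
      nlinarith [s2, h5]
    have s4 : 3*(p:ℤ)^2 ≤ (p:ℤ)^a := by
      have hcube : (p:ℤ)^3 = (p:ℤ)*(p:ℤ)^2 := by ring
      nlinarith [h2, hcube, mul_nonneg (by linarith : (0:ℤ) ≤ (p:ℤ)-3) (sq_nonneg (p:ℤ))]
    nlinarith [s3, s4, hp3', sq_nonneg ((p:ℤ)-3)]


lemma aux_pow (x : ℚ) (hx : x ≠ 0) (n : ℕ) : x^((n:ℤ)-2) * x^2 = x^n := by
  rw [← zpow_natCast x 2, ← zpow_add₀ hx, show (n:ℤ)-2+((2:ℕ):ℤ) = (n:ℤ) by push_cast; ring, zpow_natCast]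

lemma reduce_nat (p q α β : ℕ) (hp : 2 ≤ p) (hq : 2 ≤ q)
    (h : (p : ℚ) ^ ((α : ℤ) - 2) * ((p : ℚ) ^ 2 - 1)
       = (q : ℚ) ^ ((β : ℤ) - 2) * ((q : ℚ) ^ 2 - 1)) :
    p^α * (p^2-1) * q^2 = q^β * (q^2-1) * p^2 := by
  have hp0 : (p:ℚ) ≠ 0 := by positivity
  have hq0 : (q:ℚ) ≠ 0 := by positivity
  have key : (p:ℚ)^α * ((p:ℚ)^2-1) * (q:ℚ)^2 = (q:ℚ)^β * ((q:ℚ)^2-1) * (p:ℚ)^2 := by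
    have h2 := congrArg (· * ((p:ℚ)^2 * (q:ℚ)^2)) h
    calc (p:ℚ)^α * ((p:ℚ)^2-1) * (q:ℚ)^2
        = ((p:ℚ)^((α:ℤ)-2) * ((p:ℚ)^2-1)) * ((p:ℚ)^2 * (q:ℚ)^2) := by
          rw [← aux_pow (p:ℚ) hp0 α]; ring
      _ = ((q:ℚ)^((β:ℤ)-2) * ((q:ℚ)^2-1)) * ((p:ℚ)^2 * (q:ℚ)^2) := by rw [h]
      _ = (q:ℚ)^β * ((q:ℚ)^2-1) * (p:ℚ)^2 := by
          rw [← aux_pow (q:ℚ) hq0 β]; ring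
  have h1 : (1:ℕ) ≤ p^2 := by nlinarith
  have h1q : (1:ℕ) ≤ q^2 := by nlinarith
  zify [h1, h1q]
  exact_mod_cast key

theorem nat_main (p q a b : ℕ) (hp : p.Prime) (hq : q.Prime) (hpq : p < q)
    (hM : p^a * (p^2-1) = q^b * (q^2-1)) :
    (p=2 ∧ a=3 ∧ q=3 ∧ b=1) ∨ (p=2 ∧ a=3 ∧ q=5 ∧ b=0) ∨ (p=2 ∧ a=4 ∧ q=7 ∧ b=0) ∨
    (p=3 ∧ a=1 ∧ q=5 ∧ b=0) ∨ (p=5 ∧ a=1 ∧ q=11 ∧ b=0) := by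
  have hp2 := hp.two_le
  have hq3 : 3 ≤ q := by omega
  rcases Nat.eq_zero_or_pos b with hb0 | hb1
  · -- b = 0 case
    subst hb0
    rw [pow_zero, one_mul] at hM
    have ha0 : a ≠ 0 := by
      rintro rfl
      rw [pow_zero, one_mul] at hM
      have h1p : 1 ≤ p^2 := Nat.one_le_pow _ _ (by omega)
      have hlt : p^2 < q^2 := Nat.pow_lt_pow_left hpq (by norm_num)
      omega
    rcases eq_or_ne p 2 with hp2' | hpne
    · subst hp2'
      norm_num at hM
      rcases case_p2 q a hq (by omega) hM with ⟨h1, h2⟩ | ⟨h1, h2⟩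
      · right; left; exact ⟨rfl, h1, h2, rfl⟩
      · right; right; left; exact ⟨rfl, h1, h2, rfl⟩
    · have hp3 : 3 ≤ p := by omega
      rcases case_podd p q a hp hq hp3 hpq (by omega) hM with ⟨h1, h2, h3⟩ | ⟨h1, h2, h3⟩
      · right; right; right; left; exact ⟨h1, h2, h3, rfl⟩
      · right; right; right; right; exact ⟨h1, h2, h3, rfl⟩
  · -- b ≥ 1 : show p=2, q=3, a=3, b=1
    have hqd : q ∣ p^a * (p^2-1) := by
      rw [hM]; exact Dvd.dvd.mul_right (dvd_pow_self q (by omega)) _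
    have hqnp : ¬ q ∣ p^a := fun hd => by
      have := (Nat.prime_dvd_prime_iff_eq hq hp).mp (hq.dvd_of_dvd_pow hd); omega
    have hq1 : q ∣ p^2 - 1 := (hq.dvd_mul.mp hqd).resolve_left hqnp
    rw [sq_sub_one p (by omega)] at hq1
    have hq2 : q = p + 1 := by
      rcases hq.dvd_mul.mp hq1 with h1 | h1
      · have := Nat.le_of_dvd (by omega) h1; omega
      · have := Nat.le_of_dvd (by omega) h1; omega
    have hp2' : p = 2 := by
      by_contra hne
      have hop : Odd p := hp.odd_of_ne_two hne
      have hoq : Even q := by rcases hop with ⟨k, hk⟩; exact ⟨k+1, by omega⟩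
      have := (Nat.Prime.even_iff hq).mp hoq
      omega
    subst hp2'
    have hq2' : q = 3 := by omega
    subst hq2'
    norm_num at hM
    have hb1' : b = 1 := by
      by_contra hb2
      have hb2' : 2 ≤ b := by omega
      have h9 : 9 ∣ 3^b := by
        calc (9:ℕ) = 3^2 := by norm_num
        _ ∣ 3^b := Nat.pow_dvd_pow 3 hb2'
      have h9' : (9:ℕ) ∣ 2^a * 3 := by rw [hM]; exact h9.mul_right 8
      obtain ⟨k, hk⟩ := h9'
      have h3 : (3:ℕ) ∣ 2^a := ⟨k, by omega⟩
      have := (Nat.prime_dvd_prime_iff_eq (by norm_num) (by norm_num)).mp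
        ((Nat.prime_three).dvd_of_dvd_pow h3)
      omega
    subst hb1'
    have ha : 2^a = 2^3 := by norm_num at hM; omega
    have := Nat.pow_right_injective (le_refl 2) ha
    left; exact ⟨rfl, by omega, rfl, rfl⟩

theorem stmt_0 (p q : ℕ) (hp : p.Prime) (hq : q.Prime) (hpq : p < q)
    (α β : ℕ) (hα : 1 ≤ α) (hβ : 1 ≤ β)
    (h : (p : ℚ) ^ ((α : ℤ) - 2) * ((p : ℚ) ^ 2 - 1)
       = (q : ℚ) ^ ((β : ℤ) - 2) * ((q : ℚ) ^ 2 - 1)) :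
    (p, α, q, β) = (2, 5, 3, 3) ∨ (p, α, q, β) = (2, 5, 5, 2) ∨
    (p, α, q, β) = (2, 6, 7, 2) ∨ (p, α, q, β) = (3, 3, 5, 2) ∨
    (p, α, q, β) = (5, 3, 11, 2) := by
  have hp2 := hp.two_le
  have hq2 := hq.two_le
  have hE := reduce_nat p q α β hp2 hq2 h
  have h1p : 1 ≤ p^2 := Nat.one_le_pow _ _ (by omega)
  have h1q : 1 ≤ q^2 := Nat.one_le_pow _ _ (by omega)
  -- 2 ≤ α
  have hndp : ¬ p ∣ (p^2-1)*q^2 := by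
    intro hd
    rcases hp.dvd_mul.mp hd with h1 | h1
    · have := Nat.dvd_sub (dvd_pow_self p two_ne_zero) h1
      have h2 : p^2 - (p^2-1) = 1 := by omega
      rw [h2] at this
      have := Nat.le_of_dvd one_pos this
      omega
    · have := (Nat.prime_dvd_prime_iff_eq hp hq).mp (hp.dvd_of_dvd_pow h1)
      omega
  have hdp : p^2 ∣ p^α * ((p^2-1) * q^2) := by
    rw [← mul_assoc, hE]
    exact dvd_mul_left (p^2) _
  have hα2 : 2 ≤ α := by
    have hppow : p^2 ∣ p^α :=
      (((hp.coprime_iff_not_dvd).mpr hndp).pow_left 2).dvd_of_dvd_mul_right hdp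
    exact (Nat.pow_dvd_pow_iff_le_right hp.one_lt).mp hppow
  -- 2 ≤ β
  have hndq : ¬ q ∣ (q^2-1)*p^2 := by
    intro hd
    rcases hq.dvd_mul.mp hd with h1 | h1
    · have := Nat.dvd_sub (dvd_pow_self q two_ne_zero) h1
      have h2 : q^2 - (q^2-1) = 1 := by omega
      rw [h2] at this
      have := Nat.le_of_dvd one_pos this
      omega
    · have := (Nat.prime_dvd_prime_iff_eq hq hp).mp (hq.dvd_of_dvd_pow h1)
      omega
  have hdq : q^2 ∣ q^β * ((q^2-1) * p^2) := by
    rw [← mul_assoc, ← hE]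
    exact dvd_mul_left (q^2) _
  have hβ2 : 2 ≤ β := by
    have hqpow : q^2 ∣ q^β :=
      (((hq.coprime_iff_not_dvd).mpr hndq).pow_left 2).dvd_of_dvd_mul_right hdq
    exact (Nat.pow_dvd_pow_iff_le_right hq.one_lt).mp hqpow
  obtain ⟨a, ha⟩ : ∃ a, α = a + 2 := ⟨α - 2, by omega⟩
  obtain ⟨b, hb⟩ : ∃ b, β = b + 2 := ⟨β - 2, by omega⟩
  subst ha hb
  have hE2 : (p^a*(p^2-1))*(p^2*q^2) = (q^b*(q^2-1))*(p^2*q^2) := by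
    calc (p^a*(p^2-1))*(p^2*q^2) = p^(a+2)*(p^2-1)*q^2 := by ring
    _ = q^(b+2)*(q^2-1)*p^2 := hE
    _ = (q^b*(q^2-1))*(p^2*q^2) := by ring
  have hM : p^a * (p^2-1) = q^b * (q^2-1) :=
    Nat.eq_of_mul_eq_mul_right (by positivity) hE2
  rcases nat_main p q a b hp hq hpq hM with
    ⟨h1,h2,h3,h4⟩ | ⟨h1,h2,h3,h4⟩ | ⟨h1,h2,h3,h4⟩ | ⟨h1,h2,h3,h4⟩ | ⟨h1,h2,h3,h4⟩
  · left; subst h1 h2 h3 h4; rfl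
  · right; left; subst h1 h2 h3 h4; rfl
  · right; right; left; subst h1 h2 h3 h4; rfl
  · right; right; right; left; subst h1 h2 h3 h4; rfl
  · right; right; right; right; subst h1 h2 h3 h4; rfl
end

section
/- If $p<q$ are primes, $\alpha\geq 2$, $\beta\geq 3$ are integers and $p^{\alpha-2}(p^2-1)=q^{\beta-2}(q^2-1)$, then $p=2$, $q=3$, $\alpha=5$ and $\beta=3$. -/
theorem stmt_1 (p q : ℕ) (hp : p.Prime) (hq : q.Prime) (hpq : p < q)
    (α β : ℕ) (hα : 2 ≤ α) (hβ : 3 ≤ β)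
    (h : p ^ (α - 2) * (p ^ 2 - 1) = q ^ (β - 2) * (q ^ 2 - 1)) :
    p = 2 ∧ q = 3 ∧ α = 5 ∧ β = 3 := by
  have hp2 := hp.two_le
  have hq2 := hq.two_le
  -- factor p^2 - 1
  have key : p ^ 2 - 1 = (p - 1) * (p + 1) := by
    have h1 : 1 ≤ p ^ 2 := Nat.one_le_pow _ _ (by omega)
    have h2 : 1 ≤ p := by omega
    zify [h1, h2]; ring
  -- q divides LHS
  have hqdvd : q ∣ p ^ (α - 2) * (p ^ 2 - 1) := by
    rw [h]
    exact Dvd.dvd.mul_right (dvd_pow_self q (by omega)) _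
  have hqnp : ¬ q ∣ p ^ (α - 2) := by
    intro hd
    have := hq.dvd_of_dvd_pow hd
    have := (Nat.prime_dvd_prime_iff_eq hq hp).mp this
    omega
  have hq1 : q ∣ p ^ 2 - 1 := (hq.dvd_mul.mp hqdvd).resolve_left hqnp
  rw [key] at hq1
  have hq3 : q = p + 1 := by
    rcases hq.dvd_mul.mp hq1 with hd | hd
    · have := Nat.le_of_dvd (by omega) hd; omega
    · have := Nat.le_of_dvd (by omega) hd; omega
  have hpe : p = 2 := by
    by_contra hne
    obtain ⟨k, hk⟩ := hp.odd_of_ne_two hne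
    have : 2 ∣ q := by omega
    have := (Nat.prime_dvd_prime_iff_eq Nat.prime_two hq).mp this
    omega
  have hqe : q = 3 := by omega
  subst hpe hqe
  -- now h : 2^(α-2) * 3 = 3^(β-2) * 8
  norm_num at h
  have h3 : (3:ℕ) ^ (β - 2) ∣ 2 ^ (α - 2) * 3 := by
    rw [h]; exact Dvd.dvd.mul_right dvd_rfl _
  have hcop : Nat.Coprime (3 ^ (β - 2)) (2 ^ (α - 2)) :=
    Nat.Coprime.pow _ _ (by norm_num)
  have h4 : (3:ℕ) ^ (β - 2) ∣ 3 := (Nat.Coprime.dvd_of_dvd_mul_left hcop h3)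
  have h5 : β - 2 ≤ 1 := by
    by_contra hb
    have : (3:ℕ)^2 ∣ 3 ^ (β - 2) := pow_dvd_pow 3 (by omega)
    have := this.trans h4
    norm_num at this
  have hβ3 : β = 3 := by omega
  subst hβ3
  norm_num at h
  -- h : 2 ^ (α - 2) * 3 = 24
  have hα5 : α - 2 = 3 := by
    have : (2:ℕ) ^ (α - 2) = 8 := by omega
    have := Nat.pow_right_injective (le_refl 2) (this.trans (by norm_num : (8:ℕ) = 2 ^ 3))
    exact this
  exact ⟨rfl, rfl, by omega, rfl⟩
end

section
/- Let $p>2$ be prime and $b\geq 0$ an integer, and suppose $q$ is a prime with $q>p$ and $p^b(p^2-1)=q^2-1$. Then $(p,b,q)\in\{(3,1,5),(5,1,11)\}$ or $b=0$ and $q^2=p^2$ is impossible; in particular the only solutions with $b\geq 1$ are $(p,b,q)=(3,1,5)$ and $(5,1,11)$. -/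
set_option maxHeartbeats 1000000


theorem stmt_3 (p q b : ℕ) (hp : p.Prime) (hp2 : 2 < p) (hq : q.Prime)
    (hpq : p < q) (hb : 1 ≤ b)
    (h : p ^ b * (p ^ 2 - 1) = q ^ 2 - 1) :
    (p = 3 ∧ b = 1 ∧ q = 5) ∨ (p = 5 ∧ b = 1 ∧ q = 11) := by
  have hp3 : 3 ≤ p := hp2
  have hq4 : 4 ≤ q := by omega
  obtain ⟨t, rfl⟩ : ∃ t, q = t + 1 := ⟨q - 1, by omega⟩
  have ht3 : 3 ≤ t := by omega
  have hE : p ^ b * (p ^ 2 - 1) = t * (t + 2) := by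
    rw [h]
    have h1 : (t + 1) ^ 2 = t * (t + 2) + 1 := by ring
    rw [h1, Nat.add_sub_cancel]
  have hdvd : p ^ b ∣ t * (t + 2) := ⟨p ^ 2 - 1, hE.symm⟩
  have hp2pos : 1 ≤ p ^ 2 := Nat.one_le_pow _ _ hp.pos
  have hsplit : p ^ b ∣ t ∨ p ^ b ∣ t + 2 := by
    by_cases hc : p ∣ t
    · have hc2 : ¬ p ∣ t + 2 := by
        intro hc2
        have h2 : p ∣ (t + 2) - t := Nat.dvd_sub hc2 hc
        have h3 : (t + 2) - t = 2 := by omega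
        rw [h3] at h2
        have := Nat.le_of_dvd (by norm_num) h2
        omega
      have cop : Nat.Coprime (p ^ b) (t + 2) :=
        (hp.coprime_iff_not_dvd.mpr hc2).pow_left b
      exact Or.inl (cop.dvd_of_dvd_mul_right hdvd)
    · have cop : Nat.Coprime (p ^ b) t :=
        (hp.coprime_iff_not_dvd.mpr hc).pow_left b
      exact Or.inr (cop.dvd_of_dvd_mul_left hdvd)
  rcases hsplit with ⟨s, hst⟩ | ⟨s, hst⟩
  · -- Case A : t = p^b * s, leads to (5,1,11)
    have hs1 : 1 ≤ s := by
      rcases Nat.eq_zero_or_pos s with rfl | h'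
      · simp at hst; omega
      · exact h'
    have hcan : p ^ 2 - 1 = s * (t + 2) :=
      Nat.eq_of_mul_eq_mul_left (pow_pos hp.pos b)
        (hE.trans (by rw [hst]; ring))
    have hp2eq : p ^ 2 = s * (t + 2) + 1 := Nat.eq_add_of_sub_eq hp2pos hcan
    have key : p ^ 2 = p ^ b * s ^ 2 + 2 * s + 1 := by
      calc p ^ 2 = s * (t + 2) + 1 := hp2eq
        _ = s * (p ^ b * s + 2) + 1 := by rw [hst]
        _ = p ^ b * s ^ 2 + 2 * s + 1 := by ring
    have hb1 : b = 1 := by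
      by_contra hb2
      have h2b : 2 ≤ b := by omega
      have hle : p ^ 2 ≤ p ^ b := Nat.pow_le_pow_right hp.pos h2b
      nlinarith [key, Nat.le_mul_of_pos_right (p ^ b) (show 0 < s ^ 2 by positivity)]
    subst hb1
    rw [pow_one] at key hst
    have hsp : s < p := by
      by_contra h'
      push_neg at h'
      nlinarith [key]
    have hdvd2 : p ∣ 2 * s + 1 := by
      have h1 : p ∣ p * s ^ 2 + (2 * s + 1) := by
        rw [show p * s ^ 2 + (2 * s + 1) = p * s ^ 2 + 2 * s + 1 by ring, ← key]
        exact dvd_pow_self p two_ne_zero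
      exact (Nat.dvd_add_right ⟨s ^ 2, rfl⟩).mp h1
    obtain ⟨k, hk⟩ := hdvd2
    have hk1 : k = 1 := by
      rcases k with _ | _ | k
      · omega
      · rfl
      · exfalso
        have h2 : p * 2 ≤ p * (k + 2) := Nat.mul_le_mul_left p (by omega)
        linarith [hk]
    rw [hk1, mul_one] at hk
    have hs2 : s ≤ 2 := by
      have h1 : p * s ^ 2 < p * (2 * s + 1) := by
        rw [hk]; linarith [key]
      have h2 : s ^ 2 < 2 * s + 1 := Nat.lt_of_mul_lt_mul_left h1
      nlinarith
    interval_cases s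
    · rw [← hk] at key; norm_num at key
    · right
      refine ⟨by omega, rfl, by omega⟩
  · -- Case B : t + 2 = p^b * s, leads to (3,1,5)
    have hs1 : 1 ≤ s := by
      rcases Nat.eq_zero_or_pos s with rfl | h'
      · simp at hst
      · exact h'
    have hcan : p ^ 2 - 1 = s * t :=
      Nat.eq_of_mul_eq_mul_left (pow_pos hp.pos b)
        (hE.trans (by rw [hst]; ring))
    have hp2eq : p ^ 2 = s * t + 1 := Nat.eq_add_of_sub_eq hp2pos hcan
    have key : p ^ 2 + 2 * s = p ^ b * s ^ 2 + 1 := by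
      calc p ^ 2 + 2 * s = (s * t + 1) + 2 * s := by rw [hp2eq]
        _ = s * (t + 2) + 1 := by ring
        _ = s * (p ^ b * s) + 1 := by rw [hst]
        _ = p ^ b * s ^ 2 + 1 := by ring
    rcases Nat.lt_or_ge s 2 with hs2' | hs2
    · -- s = 1 : impossible
      exfalso
      have hseq : s = 1 := by omega
      subst hseq
      have key1 : p ^ b = p ^ 2 + 1 := by nlinarith [key]
      have hd1 : p ∣ p ^ b := dvd_pow_self p (by omega)
      have hd2 : p ∣ p ^ 2 := dvd_pow_self p two_ne_zero
      rw [key1] at hd1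
      have : p ∣ 1 := (Nat.dvd_add_right hd2).mp hd1
      have := Nat.le_of_dvd one_pos this
      omega
    · have hb1 : b = 1 := by
        by_contra hb2
        have h2b : 2 ≤ b := by omega
        have hle : p ^ 2 ≤ p ^ b := Nat.pow_le_pow_right hp.pos h2b
        have hst3 : 3 * s ≤ s * t := by
          calc 3 * s = s * 3 := by ring
            _ ≤ s * t := Nat.mul_le_mul_left s ht3
        have h4 : p ^ 2 * s ^ 2 ≤ p ^ b * s ^ 2 := Nat.mul_le_mul_right _ hle
        have h5 : 4 ≤ s ^ 2 := by
          calc 4 = 2 * 2 := rfl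
            _ ≤ s * s := Nat.mul_le_mul hs2 hs2
            _ = s ^ 2 := (sq s).symm
        have h6 : p ^ 2 * 4 ≤ p ^ 2 * s ^ 2 := Nat.mul_le_mul_left _ h5
        have h7 : 1 ≤ p ^ 2 := hp2pos
        linarith [key, hp2eq, hst3, h4, h6, h7]
      subst hb1
      rw [pow_one] at key hst
      have hsp : s < p := by
        by_contra h'
        push_neg at h'
        have hst3 : 3 * s ≤ s * t := by nlinarith
        nlinarith [key, hp2eq]
      -- p divides 2*s - 1, done in ℤ
      have kz : (p : ℤ) * s ^ 2 + 1 = (p : ℤ) ^ 2 + 2 * s := by exact_mod_cast key.symm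
      have hdz : (p : ℤ) ∣ 2 * (s : ℤ) - 1 := ⟨(s : ℤ) ^ 2 - p, by linear_combination -kz⟩
      obtain ⟨k, hk⟩ := hdz
      have hpz : (3 : ℤ) ≤ p := by exact_mod_cast hp3
      have hsz : (2 : ℤ) ≤ s := by exact_mod_cast hs2
      have hspz : (s : ℤ) < p := by exact_mod_cast hsp
      have hk1 : k = 1 := by
        have hk0 : 1 ≤ k := by nlinarith
        have hk2 : k ≤ 1 := by nlinarith
        omega
      subst hk1
      rw [mul_one] at hk
      have hp5 : p + 1 = 2 * s := by
        have : (p : ℤ) + 1 = 2 * s := by linarith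
        exact_mod_cast this
      have hs2' : s ≤ 2 := by nlinarith [key, hp5]
      interval_cases s
      · left
        refine ⟨by omega, rfl, by omega⟩
end

section
/- Let $p>2$ be a prime, $b\geq 2$ an integer, and $q>p$ a prime. Then $p^b(p^2-1)=q^2-1$ has no solution with $b\geq 2$ and $p^b\mid q-1$; in particular, there is no configuration with $p^b \mid q-1$ and $(q+1) \mid p^2-1$. -/
theorem stmt_6 (p q b : ℕ) (hp : p.Prime) (hp2 : 2 < p) (hq : q.Prime)
    (hpq : p < q) (hb : 2 ≤ b)
    (h : p ^ b * (p ^ 2 - 1) = q ^ 2 - 1)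
    (hdvd : p ^ b ∣ q - 1) : False := by
  obtain ⟨k, hk⟩ := hdvd
  have hqpos : 3 < q := by omega
  have hfac : q ^ 2 - 1 = (q - 1) * (q + 1) := by
    have h1 : 1 ≤ q := by omega
    nlinarith [Nat.sub_add_cancel h1, Nat.sub_add_cancel (by nlinarith : 1 ≤ q ^ 2)]
  have hpb : 0 < p ^ b := pow_pos (by omega) b
  have hcancel : p ^ 2 - 1 = k * (q + 1) := by
    apply Nat.eq_of_mul_eq_mul_left hpb
    rw [h, hfac, hk]; ring
  have hk1 : 1 ≤ k := by
    rcases Nat.eq_zero_or_pos k with h0 | h0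
    · rw [h0, Nat.mul_zero] at hk; omega
    · exact h0
  have h1 : q + 1 ≤ p ^ 2 - 1 := by
    rw [hcancel]; exact Nat.le_mul_of_pos_left _ hk1
  have h2 : p ^ 2 ≤ p ^ b := Nat.pow_le_pow_right (by omega) hb
  have h3 : p ^ b ≤ q - 1 := Nat.le_of_dvd (by omega) ⟨k, hk⟩
  omega
end

section
/- Let $g\geq 2$ be an integer and $m=p_1^{e_1}\cdots p_r^{e_r}$. Then the set $S$ of natural numbers $u$ with $\gcd(u,gm)=1$ and $p_j^{e_j}\nmid \mathrm{ord}_g(u)$ for all $1\leq j\leq r$ is completely multiplicative: for all naturals $x,y$, $xy\in S$ if and only if $x\in S$ and $y\in S$. -/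
/-! If `x ∣ c - 1` and `y ∣ c - 1`, then `c ^ y - 1 = (c - 1) · (1 + c + ⋯ + c ^ (y - 1))` with the
second factor `≡ y ≡ 0 (mod y)`, so `x * y ∣ c ^ y - 1`. Taking `c = g ^ L`, `L = lcm (ord_x g, ord_y g)`,
gives `ord_{xy} g ∣ y * L`. When `y` is prime to `p`, a power of `p` dividing `ord_{xy} g` therefore
divides `L`, hence `ord_x g` or `ord_y g`. Conversely `ord_x g ∣ ord_{xy} g`. -/

theorem mul_natCast_dvd_pow_sub_one {R : Type*} [CommRing R] {a c : R} {n : ℕ}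
    (ha : a ∣ c - 1) (hn : (n : R) ∣ c - 1) : a * n ∣ c ^ n - 1 := by
  have hsum : (n : R) ∣ ∑ i ∈ Finset.range n, c ^ i := by
    simpa using dvd_geom_sum₂_self (y := (1 : R)) hn
  rw [← geom_sum_mul, mul_comm a]
  exact mul_dvd_mul hsum ha

theorem Nat.Prime.pow_dvd_or_pow_dvd_of_pow_dvd_lcm {p e a b : ℕ} (hp : p.Prime)
    (h : p ^ e ∣ Nat.lcm a b) : p ^ e ∣ a ∨ p ^ e ∣ b := by
  rcases eq_or_ne a 0 with rfl | ha
  · exact Or.inl (dvd_zero _)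
  rcases eq_or_ne b 0 with rfl | hb
  · exact Or.inr (dvd_zero _)
  simp only [hp.pow_dvd_iff_le_factorization ha, hp.pow_dvd_iff_le_factorization hb,
    hp.pow_dvd_iff_le_factorization (Nat.lcm_ne_zero ha hb), Nat.factorization_lcm ha hb,
    Finsupp.sup_apply, le_sup_iff] at h ⊢
  exact h

namespace ZMod

theorem natCast_pow_eq_one_iff (g n k : ℕ) : (g : ZMod n) ^ k = 1 ↔ (n : ℤ) ∣ (g : ℤ) ^ k - 1 := by
  rw [← sub_eq_zero, ← intCast_zmod_eq_zero_iff_dvd]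
  push_cast
  rfl

theorem orderOf_natCast_dvd_of_dvd (g : ℕ) {a b : ℕ} (h : a ∣ b) :
    orderOf (g : ZMod a) ∣ orderOf (g : ZMod b) := by
  simpa using orderOf_map_dvd (castHom h (ZMod a)).toMonoidHom (g : ZMod b)

theorem orderOf_natCast_mul_dvd (g x y : ℕ) :
    orderOf (g : ZMod (x * y)) ∣ y * Nat.lcm (orderOf (g : ZMod x)) (orderOf (g : ZMod y)) := by
  set L := Nat.lcm (orderOf (g : ZMod x)) (orderOf (g : ZMod y))
  have hx : (x : ℤ) ∣ (g : ℤ) ^ L - 1 :=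
    (natCast_pow_eq_one_iff g x L).mp (orderOf_dvd_iff_pow_eq_one.mp (Nat.dvd_lcm_left _ _))
  have hy : (y : ℤ) ∣ (g : ℤ) ^ L - 1 :=
    (natCast_pow_eq_one_iff g y L).mp (orderOf_dvd_iff_pow_eq_one.mp (Nat.dvd_lcm_right _ _))
  rw [orderOf_dvd_iff_pow_eq_one, natCast_pow_eq_one_iff, mul_comm y, pow_mul]
  exact_mod_cast mul_natCast_dvd_pow_sub_one hx hy

end ZMod

theorem stmt_13_general (g : ℕ) (m : ℕ)
    (S : Set ℕ)
    (hS : S = {u : ℕ | Nat.Coprime u (g * m) ∧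
      ∀ p ∈ m.primeFactors, ¬ p ^ m.factorization p ∣ orderOf ((g : ZMod u))}) :
    ∀ x y : ℕ, x * y ∈ S ↔ x ∈ S ∧ y ∈ S := by
  subst hS
  intro x y
  simp only [Set.mem_ofPred_eq, Nat.coprime_mul_iff_left]
  constructor
  · rintro ⟨⟨hx, hy⟩, hxy⟩
    exact ⟨⟨hx, fun p hp hdvd => hxy p hp
        (hdvd.trans (ZMod.orderOf_natCast_dvd_of_dvd g (dvd_mul_right x y)))⟩,
      ⟨hy, fun p hp hdvd => hxy p hp
        (hdvd.trans (ZMod.orderOf_natCast_dvd_of_dvd g (dvd_mul_left y x)))⟩⟩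
  · rintro ⟨⟨hx, hordx⟩, ⟨hy, hordy⟩⟩
    refine ⟨⟨hx, hy⟩, fun p hp hdvd => ?_⟩
    have hp_prime : p.Prime := Nat.prime_of_mem_primeFactors hp
    have hpy : Nat.Coprime (p ^ m.factorization p) y :=
      (((hy.coprime_dvd_right (dvd_mul_left m g)).coprime_dvd_right
        (Nat.dvd_of_mem_primeFactors hp)).symm).pow_left _
    have hlcm := hpy.dvd_of_dvd_mul_left (hdvd.trans (ZMod.orderOf_natCast_mul_dvd g x y))
    exact (hp_prime.pow_dvd_or_pow_dvd_of_pow_dvd_lcm hlcm).elim (hordx p hp) (hordy p hp)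

theorem stmt_13 (g : ℕ) (hg : 2 ≤ g) (m : ℕ) (hm : 1 < m)
    (S : Set ℕ)
    (hS : S = {u : ℕ | Nat.Coprime u (g * m) ∧
      ∀ p ∈ m.primeFactors, ¬ p ^ m.factorization p ∣ orderOf ((g : ZMod u))}) :
    ∀ x y : ℕ, x * y ∈ S ↔ x ∈ S ∧ y ∈ S :=
  stmt_13_general g m S hS
end

section
/- There is no quadruple of pairwise distinct pairs $(p_i,e_i)$, $i=1,2,3,4$, with $p_1<p_2<p_3<p_4$ primes and $e_i\geq 1$, such that $C(p_1,e_1)=C(p_2,e_2)=C(p_3,e_3)=C(p_4,e_4)$, where $C(q,n)=q^{2-n}/(q^2-1)$. -/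
noncomputable def C (q n : ℕ) : ℚ := (q : ℚ) ^ ((2 : ℤ) - n) / ((q : ℚ) ^ 2 - 1)

/-!
Clearing denominators, `C p e = C q f` for coprime `p, q` reads
`p ^ 2 * q ^ f * (q ^ 2 - 1) = q ^ 2 * p ^ e * (p ^ 2 - 1)`, which forces `e ≥ 2`, and `p ∣ q ^ 2 - 1`
as soon as `e > 2`. Since `C q 2 = 1 / (q ^ 2 - 1)` determines `q`, at most one of `p₂, p₃, p₄`
carries the exponent `2`; the other two then divide `p₁ ^ 2 - 1`, which is smaller than their
product.
-/

lemma C_two_injective : Function.Injective (C · 2) := by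
  intro p q h
  simp only [C, Nat.cast_ofNat, sub_self, zpow_zero, one_div, inv_inj, sub_left_inj] at h
  exact_mod_cast (pow_left_inj₀ (Nat.cast_nonneg p) (Nat.cast_nonneg q) two_ne_zero).1 h

variable {p q e f : ℕ}

lemma mul_eq_mul_of_C_eq (hp : 2 ≤ p) (hq : 2 ≤ q) (h : C p e = C q f) :
    p ^ 2 * q ^ f * (q ^ 2 - 1) = q ^ 2 * p ^ e * (p ^ 2 - 1) := by
  have hp' : (2 : ℚ) ≤ p := by exact_mod_cast hp
  have hq' : (2 : ℚ) ≤ q := by exact_mod_cast hq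
  have hp1 : (p : ℚ) ^ 2 - 1 ≠ 0 := by nlinarith
  have hq1 : (q : ℚ) ^ 2 - 1 ≠ 0 := by nlinarith
  unfold C at h
  rw [zpow_sub₀ (by positivity), zpow_sub₀ (by positivity), zpow_natCast, zpow_natCast] at h
  field_simp at h
  have h1p : 1 ≤ p ^ 2 := Nat.one_le_pow _ _ (by omega)
  have h1q : 1 ≤ q ^ 2 := Nat.one_le_pow _ _ (by omega)
  qify [h1p, h1q]
  linear_combination h

lemma two_le_of_C_eq (hp : p.Prime) (hq : 2 ≤ q) (hpq : p.Coprime q) (h : C p e = C q f) :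
    2 ≤ e := by
  have hdvd : p ^ 2 ∣ p ^ e * (q ^ 2 * (p ^ 2 - 1)) := by
    refine Dvd.intro (q ^ f * (q ^ 2 - 1)) ?_
    rw [← mul_assoc, mul_eq_mul_of_C_eq hp.two_le hq h]
    ring
  have hcop : (p ^ 2).Coprime (q ^ 2 * (p ^ 2 - 1)) :=
    (hpq.pow 2 2).mul_right ((Nat.coprime_self_sub_right (Nat.one_le_pow _ _ hp.pos)).2
      (Nat.coprime_one_right _))
  exact (Nat.pow_dvd_pow_iff_le_right hp.one_lt).1 (hcop.dvd_of_dvd_mul_right hdvd)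

lemma dvd_sq_sub_one_of_C_eq (hp : p.Prime) (hq : 2 ≤ q) (hpq : p.Coprime q)
    (he : 2 < e) (h : C p e = C q f) : p ∣ q ^ 2 - 1 := by
  obtain ⟨k, rfl⟩ : ∃ k, e = k + 3 := ⟨e - 3, by omega⟩
  have hcancel : q ^ f * (q ^ 2 - 1) = p * (p ^ k * q ^ 2 * (p ^ 2 - 1)) := by
    refine Nat.eq_of_mul_eq_mul_left (pow_pos hp.pos 2) ?_
    rw [← mul_assoc, mul_eq_mul_of_C_eq hp.two_le hq h]
    ring
  exact (hpq.pow_right f).dvd_of_dvd_mul_left (Dvd.intro _ hcancel.symm)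

lemma not_mul_dvd_sq_sub_one {n a b : ℕ} (hn : 2 ≤ n) (ha : n < a) (hb : n < b) :
    ¬ a * b ∣ n ^ 2 - 1 := by
  intro hdvd
  have hle := Nat.le_of_dvd (Nat.sub_pos_of_lt (Nat.one_lt_pow two_ne_zero (by omega))) hdvd
  have hlt : n ^ 2 < a * b := by rw [sq]; exact Nat.mul_lt_mul'' ha hb
  omega

lemma eq_two_or_eq_two_of_C_eq {a b ea eb : ℕ} (hp : p.Prime) (ha : a.Prime) (hb : b.Prime)
    (hpa : p < a) (hab : a < b) (hCa : C a ea = C p e) (hCb : C b eb = C p e) :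
    ea = 2 ∨ eb = 2 := by
  have hpb := hpa.trans hab
  have hcop {r : ℕ} (hr : r.Prime) (hpr : p < r) : r.Coprime p :=
    (Nat.coprime_primes hr hp).2 hpr.ne'
  by_contra! hne
  have hea := two_le_of_C_eq ha hp.two_le (hcop ha hpa) hCa
  have heb := two_le_of_C_eq hb hp.two_le (hcop hb hpb) hCb
  have hda := dvd_sq_sub_one_of_C_eq ha hp.two_le (hcop ha hpa) (by omega) hCa
  have hdb := dvd_sq_sub_one_of_C_eq hb hp.two_le (hcop hb hpb) (by omega) hCb
  exact not_mul_dvd_sq_sub_one hp.two_le hpa hpb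
    (((Nat.coprime_primes ha hb).2 hab.ne).mul_dvd_of_dvd_of_dvd hda hdb)

theorem stmt_19 :
    ¬ ∃ (p₁ p₂ p₃ p₄ e₁ e₂ e₃ e₄ : ℕ),
      p₁.Prime ∧ p₂.Prime ∧ p₃.Prime ∧ p₄.Prime ∧
      p₁ < p₂ ∧ p₂ < p₃ ∧ p₃ < p₄ ∧
      1 ≤ e₁ ∧ 1 ≤ e₂ ∧ 1 ≤ e₃ ∧ 1 ≤ e₄ ∧
      C p₁ e₁ = C p₂ e₂ ∧ C p₂ e₂ = C p₃ e₃ ∧ C p₃ e₃ = C p₄ e₄ := by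
  rintro ⟨p₁, p₂, p₃, p₄, e₁, e₂, e₃, e₄, hp₁, hp₂, hp₃, hp₄, h₁₂, h₂₃, h₃₄,
    -, -, -, -, c₁₂, c₂₃, c₃₄⟩
  have c₁₃ := c₁₂.trans c₂₃
  have c₁₄ := c₁₃.trans c₃₄
  have c₂₄ := c₂₃.trans c₃₄
  have h₁₃ := h₁₂.trans h₂₃
  have e₂₃ := eq_two_or_eq_two_of_C_eq hp₁ hp₂ hp₃ h₁₂ h₂₃ c₁₂.symm c₁₃.symm
  have e₂₄ := eq_two_or_eq_two_of_C_eq hp₁ hp₂ hp₄ h₁₂ (h₂₃.trans h₃₄) c₁₂.symm c₁₄.symm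
  have e₃₄ := eq_two_or_eq_two_of_C_eq hp₁ hp₃ hp₄ h₁₃ h₃₄ c₁₃.symm c₁₄.symm
  obtain ⟨rfl, rfl⟩ | ⟨rfl, rfl⟩ | ⟨rfl, rfl⟩ :
      (e₂ = 2 ∧ e₃ = 2) ∨ (e₂ = 2 ∧ e₄ = 2) ∨ (e₃ = 2 ∧ e₄ = 2) := by omega
  · exact h₂₃.ne (C_two_injective c₂₃)
  · exact (h₂₃.trans h₃₄).ne (C_two_injective c₂₄)
  · exact h₃₄.ne (C_two_injective c₃₄)
end
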